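/- Algorithm KPT satisfies Confirmation Validity: if a miner labels block b as accepted (all cousin blocks of b are labeled rejected, where a block is labeled rejected when every branch it belongs to has been observed shorter than some cousin block's depth for 2·PT consecutive rounds), then b is accepted, i.e., b lies on the unique infinite branch. -/

import Mathlib

/-- `b` is an ancestor of `c` or equal to it. -/
def AncOrEq {B : Type} (parent : B → Option B) (b c : B) : Prop :=
  Relation.ReflTransGen (fun x y => parent x = some y) c b

/-- An infinite branch: a path from the root following the child relation. -/
def InfBranch {B : Type} (parent : B → Option B) (root : B) (f : ℕ → B) : Prop :=
  f 0 = root ∧ ∀ n, parent (f (n + 1)) = some (f n)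

/-- A (maximal) branch of the tree: a set of blocks containing the root, closed under
parent, pairwise comparable, and maximal with these properties. -/
def IsMaxBranch {B : Type} (parent : B → Option B) (root : B) (C : Set B) : Prop :=
  root ∈ C ∧
  (∀ c ∈ C, ∀ p : B, parent c = some p → p ∈ C) ∧
  (∀ c ∈ C, ∀ c' ∈ C, AncOrEq parent c c' ∨ AncOrEq parent c' c) ∧
  (∀ d : B, (∀ c ∈ C, AncOrEq parent c d ∨ AncOrEq parent d c) → d ∈ C)

/-!
Suppose `b` is not on the infinite branch `g`. The block `g (depth b + 1)` is deeper than `b`,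
so it is not an ancestor of `b`, and its ancestors all lie on `g`, so `b` is not one of them:
it is a cousin of `b`, hence labelled rejected. The branch `range g` contains it and is a
maximal branch, so the rejection rule together with the dead-branch lemma makes `range g`
finite, which is absurd since depth strictly increases along `g`.
-/

section Tree

variable {B : Type} {parent : B → Option B} {root : B} {depth : B → ℕ} {g : ℕ → B}

theorem depth_le_of_ancOrEq (hdepth : ∀ c p : B, parent c = some p → depth c = depth p + 1)
    {a c : B} (h : AncOrEq parent a c) : depth a ≤ depth c := by
  induction h with
  | refl => exact le_rfl
  | tail _ hstep ih => have := hdepth _ _ hstep; omega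

namespace InfBranch

theorem depth_eq (hg : InfBranch parent root g)
    (hdepth : ∀ c p : B, parent c = some p → depth c = depth p + 1) (n : ℕ) :
    depth (g n) = depth root + n := by
  induction n with
  | zero => rw [hg.1, Nat.add_zero]
  | succ n ih => rw [hdepth _ _ (hg.2 n), ih, Nat.add_assoc]

theorem injective (hg : InfBranch parent root g)
    (hdepth : ∀ c p : B, parent c = some p → depth c = depth p + 1) : Function.Injective g := by
  intro i j hij
  have := congrArg depth hij
  rwa [hg.depth_eq hdepth, hg.depth_eq hdepth, Nat.add_left_cancel_iff] at this

theorem ancOrEq_of_le (hg : InfBranch parent root g) {k n : ℕ} (hkn : k ≤ n) :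
    AncOrEq parent (g k) (g n) := by
  induction n, hkn using Nat.le_induction with
  | base => exact Relation.ReflTransGen.refl
  | succ n _ ih => exact Relation.ReflTransGen.head (hg.2 n) ih

theorem mem_range_of_ancOrEq (hg : InfBranch parent root g) (hroot : parent root = none)
    {c : B} {n : ℕ} (h : AncOrEq parent c (g n)) : c ∈ Set.range g := by
  induction n generalizing c with
  | zero =>
    rcases Relation.ReflTransGen.cases_head h with rfl | ⟨_, hstep, _⟩
    · exact ⟨0, rfl⟩
    · simp [hg.1, hroot] at hstep
  | succ n ih =>
    rcases Relation.ReflTransGen.cases_head h with rfl | ⟨y, hstep, hrest⟩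
    · exact ⟨n + 1, rfl⟩
    · rw [hg.2 n, Option.some.injEq] at hstep
      exact ih (hstep ▸ hrest)

theorem isMaxBranch_range (hg : InfBranch parent root g) (hroot : parent root = none)
    (hdepth : ∀ c p : B, parent c = some p → depth c = depth p + 1) :
    IsMaxBranch parent root (Set.range g) := by
  refine ⟨⟨0, hg.1⟩, ?_, ?_, ?_⟩
  · rintro _ ⟨n, rfl⟩ p hp
    exact hg.mem_range_of_ancOrEq hroot (Relation.ReflTransGen.single hp)
  · rintro _ ⟨n, rfl⟩ _ ⟨n', rfl⟩
    rcases le_total n n' with h | h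
    · exact .inl (hg.ancOrEq_of_le h)
    · exact .inr (hg.ancOrEq_of_le h)
  · intro d hd
    rcases hd (g (depth d + 1)) ⟨_, rfl⟩ with h | h
    · have := depth_le_of_ancOrEq hdepth h
      rw [hg.depth_eq hdepth] at this
      omega
    · exact hg.mem_range_of_ancOrEq hroot h

theorem exists_cousin_mem_range (hg : InfBranch parent root g) (hroot : parent root = none)
    (hdepth : ∀ c p : B, parent c = some p → depth c = depth p + 1) {b : B}
    (hb : b ∉ Set.range g) :
    ∃ c ∈ Set.range g, ¬ AncOrEq parent c b ∧ ¬ AncOrEq parent b c := by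
  refine ⟨g (depth b + 1), ⟨_, rfl⟩, fun h => ?_, fun h => hb (hg.mem_range_of_ancOrEq hroot h)⟩
  have := depth_le_of_ancOrEq hdepth h
  rw [hg.depth_eq hdepth] at this
  omega

end InfBranch

end Tree

theorem stmt_18_general {B M : Type} (root : B) (parent : B → Option B) (depth : B → ℕ)
    (knows : ℕ → M → B → Prop) (PT : ℕ)
    (hroot : parent root = none)
    (hdepth : ∀ c p : B, parent c = some p → depth c = depth p + 1)
    (g : ℕ → B) (hg : InfBranch parent root g)
    (m : M) (b : B)
    (Rej : B → Prop)
    (hrule : ∀ c, Rej c → ∀ C : Set B, IsMaxBranch parent root C → c ∈ C →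
      ∃ (b2 : B) (r : ℕ), b2 ∉ C ∧ knows r m b2 ∧
        ∀ ρ, r ≤ ρ → ρ ≤ r + 2 * PT → ∀ d ∈ C, knows ρ m d → depth d < depth b2)
    (hdeadLemma : ∀ C : Set B, IsMaxBranch parent root C →
      (∃ (b2 : B) (r : ℕ), b2 ∉ C ∧ knows r m b2 ∧
        ∀ ρ, r ≤ ρ → ρ ≤ r + 2 * PT → ∀ d ∈ C, knows ρ m d → depth d < depth b2) →
      C.Finite)
    (haccLabel : ∀ c : B, ¬ AncOrEq parent c b → ¬ AncOrEq parent b c → Rej c) :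
    b ∈ Set.range g := by
  by_contra hb
  obtain ⟨c, hc, hcb, hbc⟩ := hg.exists_cousin_mem_range hroot hdepth hb
  have hmax := hg.isMaxBranch_range hroot hdepth
  have hfinite := hdeadLemma _ hmax (hrule c (haccLabel c hcb hbc) _ hmax hc)
  exact Set.infinite_range_of_injective (hg.injective hdepth) hfinite

/-- Algorithm KPT satisfies Confirmation Validity. Miner `m` labels a block
`c` rejected only when, for every (maximal) branch `C` that `c` belongs to, `m` has
observed a cousin block `b2` whose depth exceeds the length of `C` (every block of `C`
known to `m` is strictly shallower than `b2`) for `2·PT` consecutive rounds; by the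
available lemma (Lemma 5 of the paper) such a branch is dead, hence finite. If `m`
labels `b` accepted — i.e. every cousin block of `b` is labeled rejected — then `b` is
accepted: it lies on the unique infinite branch `g`. -/
theorem stmt_18 {B M : Type} (root : B) (parent : B → Option B) (depth : B → ℕ)
    (knows : ℕ → M → B → Prop) (PT : ℕ)
    (hroot : parent root = none)
    (hreach : ∀ b : B, AncOrEq parent root b)
    (hdepth : ∀ c p : B, parent c = some p → depth c = depth p + 1)
    (g : ℕ → B) (hg : InfBranch parent root g)
    (huniq : ∀ f : ℕ → B, InfBranch parent root f → f = g)
    (m : M) (b : B)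
    (Rej : B → Prop)
    (hrule : ∀ c, Rej c → ∀ C : Set B, IsMaxBranch parent root C → c ∈ C →
      ∃ (b2 : B) (r : ℕ), b2 ∉ C ∧ knows r m b2 ∧
        ∀ ρ, r ≤ ρ → ρ ≤ r + 2 * PT → ∀ d ∈ C, knows ρ m d → depth d < depth b2)
    (hdeadLemma : ∀ C : Set B, IsMaxBranch parent root C →
      (∃ (b2 : B) (r : ℕ), b2 ∉ C ∧ knows r m b2 ∧
        ∀ ρ, r ≤ ρ → ρ ≤ r + 2 * PT → ∀ d ∈ C, knows ρ m d → depth d < depth b2) →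
      C.Finite)
    (haccLabel : ∀ c : B, ¬ AncOrEq parent c b → ¬ AncOrEq parent b c → Rej c) :
    b ∈ Set.range g :=
  stmt_18_general root parent depth knows PT hroot hdepth g hg m b Rej hrule hdeadLemma haccLabel
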